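/- Let L/K be a Galois extension that is not small. Then there exist an integer d > 1 and an infinite family of Galois subextensions of L/K, all of degree exactly d over K. -/

import Mathlib

/-!
Every finite subextension `M` of `L/K` lies in its normal closure in `L`, a finite Galois
subextension of degree at most `[M : K] ^ [M : K]`, and a finite separable extension has only
finitely many subfields. So if infinitely many `M` have degree `n`, their normal closures form an
infinite family of Galois subextensions of degree at most `n ^ n`, and by pigeonhole infinitely
many of them share one degree `d`; as `⊥` is the only subextension of degree one, `d > 1`.
-/

open Module IntermediateField

theorem Set.Infinite.exists_infinite_fiber_of_finite_image {α β : Type*} {s : Set α}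
    (hs : s.Infinite) (f : α → β) (himage : (f '' s).Finite) :
    ∃ b ∈ f '' s, (s ∩ f ⁻¹' {b}).Infinite := by
  by_contra! hfibers
  exact hs (Set.Finite.of_finite_fibers f himage hfibers)

theorem Set.Infinite.image_of_le_of_finite_Iic {α : Type*} [Preorder α] {s : Set α}
    (hs : s.Infinite) {f : α → α} (hle : ∀ x ∈ s, x ≤ f x)
    (hfin : ∀ x ∈ s, (Set.Iic (f x)).Finite) : (f '' s).Infinite := by
  intro himage
  refine hs (Set.Finite.of_finite_fibers f himage ?_)
  rintro _ ⟨x, hx, rfl⟩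
  exact (hfin x hx).subset fun z ⟨hz, hzx⟩ => (hle z hz).trans_eq hzx

namespace IntermediateField

variable {K L : Type*} [Field K] [Field L] [Algebra K L]

theorem finrank_finsetSup_le_prod {ι : Type*} (F : ι → IntermediateField K L) (s : Finset ι) :
    finrank K ↥(s.sup F) ≤ ∏ i ∈ s, finrank K (F i) := by
  induction s using Finset.cons_induction with
  | empty => rw [Finset.sup_empty]; simp
  | cons a s ha ih =>
    rw [Finset.sup_cons, Finset.prod_cons]
    exact (finrank_sup_le _ _).trans (Nat.mul_le_mul_left _ ih)

theorem finrank_iSup_le_prod {ι : Type*} [Fintype ι] (F : ι → IntermediateField K L) :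
    finrank K ↥(⨆ i, F i) ≤ ∏ i, finrank K (F i) := by
  rw [← Finset.sup_univ_eq_iSup]
  exact finrank_finsetSup_le_prod F Finset.univ

theorem finrank_normalClosure_le_pow (M : IntermediateField K L) [FiniteDimensional K M] :
    finrank K (normalClosure K M L) ≤ finrank K M ^ finrank K M := by
  have : Fintype (M →ₐ[K] L) := Fintype.ofFinite _
  have hrange (f : M →ₐ[K] L) : finrank K f.fieldRange = finrank K M :=
    (AlgEquiv.ofInjectiveField f).toLinearEquiv.finrank_eq.symm
  calc finrank K (normalClosure K M L)
      ≤ ∏ f : M →ₐ[K] L, finrank K f.fieldRange := by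
        rw [normalClosure_def]
        exact finrank_iSup_le_prod _
    _ = finrank K M ^ Fintype.card (M →ₐ[K] L) := by simp [hrange]
    _ ≤ finrank K M ^ finrank K M := by
        refine Nat.pow_le_pow_right finrank_pos ?_
        rw [← Nat.card_eq_fintype_card]
        exact card_algHom_le_finrank K M L

theorem finite_Iic [Algebra.IsSeparable K L] (N : IntermediateField K L) [FiniteDimensional K N] :
    (Set.Iic N).Finite := by
  have : Finite (IntermediateField K N) :=
    Field.finite_intermediateField_of_exists_primitive_element K N
      (Field.exists_primitive_element K N)
  exact (Set.finite_range (lift (F := N))).subset fun M hM => ⟨restrict hM, lift_restrict hM⟩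

theorem finite_setOf_finrank_eq_one : {M : IntermediateField K L | finrank K M = 1}.Finite :=
  (Set.finite_singleton ⊥).subset fun _ hM => finrank_eq_one_iff.mp hM

end IntermediateField

/-- Let `L/K` be a Galois extension that is not small (for some `n ≥ 1` there are
infinitely many intermediate fields of degree `n` over `K`). Then there exist `d > 1` and
an infinite family of Galois subextensions of `L/K`, all of degree exactly `d` over `K`. -/
theorem exists_infinitely_many_galois_subextensions_of_not_small
    (K L : Type*) [Field K] [Field L] [Algebra K L] [IsGalois K L]
    (h : ∃ n : ℕ, 1 ≤ n ∧
      {M : IntermediateField K L | FiniteDimensional K M ∧ Module.finrank K M = n}.Infinite) :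
    ∃ d : ℕ, 1 < d ∧
      {M : IntermediateField K L | FiniteDimensional K M ∧ Module.finrank K M = d ∧
        IsGalois K M}.Infinite := by
  obtain ⟨n, -, hinf⟩ := h
  set S := {M : IntermediateField K L | FiniteDimensional K M ∧ finrank K M = n}
  set closure : IntermediateField K L → IntermediateField K L := fun M => normalClosure K M L
  have hfd : ∀ M ∈ S, FiniteDimensional K (closure M) := fun M ⟨_, _⟩ => inferInstance
  have hclosures : (closure '' S).Infinite :=
    hinf.image_of_le_of_finite_Iic (fun M _ => le_normalClosure M)
      fun M hM => have := hfd M hM; finite_Iic (closure M)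
  have hdegrees : ((fun N : IntermediateField K L => finrank K N) '' (closure '' S)).Finite := by
    refine (Set.finite_Iic (n ^ n)).subset ?_
    rintro _ ⟨_, ⟨M, ⟨_, hM⟩, rfl⟩, rfl⟩
    exact hM ▸ finrank_normalClosure_le_pow M
  obtain ⟨d, -, hd⟩ := hclosures.exists_infinite_fiber_of_finite_image _ hdegrees
  have hgalois : {N : IntermediateField K L | FiniteDimensional K N ∧ finrank K N = d ∧
      IsGalois K N}.Infinite := by
    refine hd.mono ?_
    rintro _ ⟨⟨M, hM, rfl⟩, hdeg⟩
    exact ⟨hfd M hM, hdeg, inferInstance⟩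
  refine ⟨d, ?_, hgalois⟩
  obtain ⟨N, hN, rfl, -⟩ := hgalois.nonempty
  refine lt_of_le_of_ne finrank_pos fun h1 => hgalois ?_
  exact finite_setOf_finrank_eq_one.subset fun N' hN' => hN'.2.1.trans h1.symm
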